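/- Let G, Ω, v, d, H and N be as in the standing hypotheses. Then there exists a symmetric irreflexive relation A ⊆ Ω × Ω such that (Ω, A) is a G-arc-transitive graph of valency d if and only if the group N/H contains an element of order 2. -/

import Mathlib

/-!
A `G`-arc-transitive digraph containing the arc `(v, w)` is the orbital `G • (v, w)`; its
out-valency is the index of `G_vw` in `G_v`, and it is a graph iff `v ≠ w` and some `g ∈ G`
swaps `v` and `w`. Such a `g` normalises `G_vw`, lies outside it and squares into it; as `G_vw`
has index `d` in `G_v`, it is `G_v`-conjugate to `H`, and the conjugate of `g` gives an
involution of `N/H`.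

Conversely, let `n ∈ N \ H` with `n² ∈ H` and put `w = n • v`. Since `H` is self-normalising
in `G_v`, `w ≠ v`; moreover `H ≤ G_vw < G_v`, because distinct points of a faithful primitive
non-regular action have distinct stabilisers. Maximality of `H` gives `G_vw = H`, so the
orbital of `(v, w)` has valency `d`, and it is symmetric because `n` swaps `v` and `w`.
-/

/-- The digraph with arc-set `A` is `G`-arc-transitive: the action of `G` preserves `A`
and is transitive on `A`. -/
def IsGArcTransitiveDigraph (G : Type*) {Ω : Type*} [Group G] [MulAction G Ω]
    (A : Set (Ω × Ω)) : Prop :=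
  (∀ (g : G), ∀ p ∈ A, (g • (Prod.fst p), g • (Prod.snd p)) ∈ A) ∧
    (∀ p ∈ A, ∀ q ∈ A, ∃ g : G, g • (Prod.fst p) = Prod.fst q ∧ g • (Prod.snd p) = Prod.snd q)

/-- The digraph with arc-set `A` has out-valency `d`: every vertex has exactly `d`
out-neighbours. -/
def HasOutValency {Ω : Type*} (A : Set (Ω × Ω)) (d : ℕ) : Prop :=
  ∀ x : Ω, {y : Ω | (x, y) ∈ A}.ncard = d

open scoped Pointwise

namespace Subgroup

variable {G : Type*} [Group G]

/-- `g` maps to an element of order `2` in `N_G(H) / H`. -/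
def IsInvolutionMod (H : Subgroup G) (g : G) : Prop :=
  g ∈ normalizer (H : Set G) ∧ g ∉ H ∧ g * g ∈ H

theorem exists_orderOf_quotient_eq_two_iff {Q : Type*} [Group Q] (M : Subgroup Q) [M.Normal] :
    (∃ x : Q ⧸ M, orderOf x = 2) ↔ ∃ g : Q, g ∉ M ∧ g * g ∈ M := by
  constructor
  · rintro ⟨x, hx⟩
    obtain ⟨g, rfl⟩ := QuotientGroup.mk_surjective x
    refine ⟨g, fun hg => ?_, ?_⟩
    · rw [(QuotientGroup.eq_one_iff g).mpr hg, orderOf_one] at hx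
      exact absurd hx (by norm_num)
    · rw [← QuotientGroup.eq_one_iff, QuotientGroup.mk_mul, ← pow_two, ← hx]
      exact pow_orderOf_eq_one _
  · rintro ⟨g, hg, hgg⟩
    refine ⟨g, orderOf_eq_prime ?_ ?_⟩
    · rwa [pow_two, ← QuotientGroup.mk_mul, QuotientGroup.eq_one_iff]
    · rwa [Ne, QuotientGroup.eq_one_iff]

theorem exists_orderOf_normalizer_quotient_eq_two_iff (H : Subgroup G) :
    (∃ x : normalizer (H : Set G) ⧸ H.subgroupOf (normalizer (H : Set G)), orderOf x = 2) ↔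
      ∃ g, H.IsInvolutionMod g := by
  rw [exists_orderOf_quotient_eq_two_iff]
  simp only [mem_subgroupOf, Subtype.exists, coe_mul, IsInvolutionMod, exists_prop]

theorem IsInvolutionMod.map_equiv {G' : Type*} [Group G'] {H : Subgroup G} {g : G}
    (hg : H.IsInvolutionMod g) (e : G ≃* G') : (H.map e.toMonoidHom).IsInvolutionMod (e g) := by
  obtain ⟨hgN, hgH, hgg⟩ := hg
  refine ⟨?_, ?_, ?_⟩
  · rw [← map_equiv_normalizer_eq]
    exact mem_map_of_mem _ hgN
  · rwa [mem_map_equiv, MulEquiv.symm_apply_apply]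
  · rwa [mem_map_equiv, map_mul, MulEquiv.symm_apply_apply]

theorem map_conj_eq_of_map_conj_subgroupOf {S K H : Subgroup G} (hK : K ≤ S) (hH : H ≤ S)
    {a : S} (h : (K.subgroupOf S).map (MulAut.conj a).toMonoidHom = H.subgroupOf S) :
    K.map (MulAut.conj (a : G)).toMonoidHom = H := by
  have hcomm : S.subtype.comp (MulAut.conj a).toMonoidHom =
      (MulAut.conj (a : G)).toMonoidHom.comp S.subtype := by
    ext; simp
  have := congrArg (map S.subtype) h
  rwa [map_map, hcomm, ← map_map, subgroupOf_map_subtype, subgroupOf_map_subtype,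
    inf_of_le_left hK, inf_of_le_left hH] at this

end Subgroup

namespace MulAction

open Subgroup

variable {G Ω : Type*} [Group G] [MulAction G Ω]

theorem isGArcTransitiveDigraph_orbit (p : Ω × Ω) : IsGArcTransitiveDigraph G (orbit G p) := by
  refine ⟨fun g q hq => mem_orbit_of_mem_orbit g hq, fun q hq r hr => ?_⟩
  rw [← orbit_eq_iff.mpr hq] at hr
  obtain ⟨g, hg⟩ := hr
  exact ⟨g, congrArg Prod.fst hg, congrArg Prod.snd hg⟩

theorem _root_.IsGArcTransitiveDigraph.eq_orbit {A : Set (Ω × Ω)} (hA : IsGArcTransitiveDigraph G A)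
    {p : Ω × Ω} (hp : p ∈ A) : A = orbit G p := by
  ext q
  constructor
  · intro hq
    obtain ⟨g, h₁, h₂⟩ := hA.2 p hp q hq
    exact ⟨g, Prod.ext h₁ h₂⟩
  · rintro ⟨g, rfl⟩
    exact hA.1 g p hp

theorem swap_mem_orbit_of_swap_mem {v w : Ω} (h : (w, v) ∈ orbit G (v, w)) {x y : Ω}
    (hxy : (x, y) ∈ orbit G (v, w)) : (y, x) ∈ orbit G (v, w) := by
  obtain ⟨g, hg⟩ := hxy
  obtain ⟨rfl, rfl⟩ := Prod.mk.inj hg.symm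
  exact mem_orbit_of_mem_orbit g h

theorem not_diag_mem_orbit {v w : Ω} (hvw : v ≠ w) (x : Ω) : (x, x) ∉ orbit G (v, w) := by
  rintro ⟨g, hg⟩
  exact hvw (smul_left_cancel g ((congrArg Prod.fst hg).trans (congrArg Prod.snd hg).symm))

theorem setOf_smul_mem_orbit (c : G) (v w : Ω) :
    {y | (c • v, y) ∈ orbit G (v, w)} = c • orbit (stabilizer G v) w := by
  ext y
  rw [Set.mem_smul_set_iff_inv_smul_mem]
  constructor
  · rintro ⟨g, hg⟩
    have hv : g • v = c • v := congrArg Prod.fst hg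
    refine ⟨⟨c⁻¹ * g, by rw [mem_stabilizer_iff, mul_smul, hv, inv_smul_smul]⟩, ?_⟩
    change (c⁻¹ * g) • w = c⁻¹ • y
    rw [mul_smul]
    exact congrArg (c⁻¹ • ·) (congrArg Prod.snd hg)
  · rintro ⟨s, hs⟩
    refine ⟨c * s, Prod.ext ?_ ?_⟩
    · change (c * s) • v = c • v
      rw [mul_smul, s.2]
    · change (c * s) • w = y
      rw [mul_smul, ← Subgroup.smul_def, show s • w = c⁻¹ • y from hs, smul_inv_smul]

theorem hasOutValency_orbit_iff [IsPretransitive G Ω] (v w : Ω) (d : ℕ) :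
    HasOutValency (orbit G (v, w)) d ↔
      ((stabilizer G w).subgroupOf (stabilizer G v)).index = d := by
  change HasOutValency _ d ↔ (stabilizer (stabilizer G v) w).index = d
  rw [index_stabilizer]
  constructor
  · intro h
    rw [← Set.ncard_smul_set (1 : G), ← setOf_smul_mem_orbit, one_smul]
    exact h v
  · intro h x
    obtain ⟨c, rfl⟩ := exists_smul_eq G v x
    rw [setOf_smul_mem_orbit, Set.ncard_smul_set, h]

theorem stabilizer_smul_eq_of_normal {v : Ω} (hv : (stabilizer G v).Normal) (c : G) :
    stabilizer G (c • v) = stabilizer G v := by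
  rw [stabilizer_smul_eq_stabilizer_map_conj]
  exact normal_iff_map_conj_eq.mp hv c

theorem stabilizer_eq_bot_of_normal [FaithfulSMul G Ω] [IsPretransitive G Ω] {v : Ω}
    (hv : (stabilizer G v).Normal) : stabilizer G v = ⊥ := by
  rw [eq_bot_iff_forall]
  intro s hs
  apply FaithfulSMul.eq_of_smul_eq_smul (α := Ω)
  intro x
  obtain ⟨c, rfl⟩ := exists_smul_eq G v x
  rw [one_smul, ← mem_stabilizer_iff, stabilizer_smul_eq_of_normal hv]
  exact hs

theorem not_stabilizer_le_of_ne [FaithfulSMul G Ω] [IsPretransitive G Ω]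
    (hprim : ∀ ω : Ω, IsCoatom (stabilizer G ω)) (hnonreg : ∃ ω : Ω, stabilizer G ω ≠ ⊥)
    {v w : Ω} (hvw : v ≠ w) : ¬ stabilizer G v ≤ stabilizer G w := by
  intro hle
  have heq : stabilizer G w = stabilizer G v :=
    ((hprim v).le_iff.mp hle).resolve_left (hprim w).1
  obtain ⟨g, rfl⟩ := exists_smul_eq G v w
  have hg : g ∈ normalizer (stabilizer G v : Set G) := by
    rw [mem_normalizer_iff_map_conj_eq]
    exact (stabilizer_smul_eq_stabilizer_map_conj g v).symm.trans heq
  rcases (hprim v).le_iff.mp (le_normalizer (H := stabilizer G v)) with htop | hself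
  · obtain ⟨ω, hω⟩ := hnonreg
    obtain ⟨c, rfl⟩ := exists_smul_eq G v ω
    have hnormal : (stabilizer G v).Normal := normalizer_eq_top_iff.mp htop
    rw [stabilizer_smul_eq_of_normal hnormal, stabilizer_eq_bot_of_normal hnormal] at hω
    exact hω rfl
  · rw [hself] at hg
    exact hvw hg.symm

theorem isInvolutionMod_stabilizer_inf {g : G} {v w : Ω} (hv : g • v = w) (hw : g • w = v)
    (hvw : v ≠ w) : (stabilizer G v ⊓ stabilizer G w).IsInvolutionMod g := by
  refine ⟨?_, fun hg => hvw (hv.symm.trans (mem_stabilizer_iff.mp (mem_inf.mp hg).1)).symm,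
    mem_inf.mpr ⟨?_, ?_⟩⟩
  · rw [mem_normalizer_iff_map_conj_eq]
    have := map_inf (stabilizer G v) (stabilizer G w) (MulAut.conj g).toMonoidHom
      (MulAut.conj g).injective
    rw [← stabilizer_smul_eq_stabilizer_map_conj, ← stabilizer_smul_eq_stabilizer_map_conj,
      hv, hw] at this
    exact this.trans (inf_comm _ _)
  · rw [mem_stabilizer_iff, mul_smul, hv, hw]
  · rw [mem_stabilizer_iff, mul_smul, hw, hv]

variable {H : Subgroup G} {v : Ω} {n : G}

theorem le_stabilizer_smul_of_mem_normalizer (hHv : H ≤ stabilizer G v)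
    (hn : n ∈ normalizer (H : Set G)) : H ≤ stabilizer G (n • v) := by
  rw [stabilizer_smul_eq_stabilizer_map_conj]
  calc H = H.map (MulAut.conj n).toMonoidHom := (mem_normalizer_iff_map_conj_eq.mp hn).symm
    _ ≤ _ := map_mono hHv

theorem smul_ne_of_normalizer_subgroupOf_eq (hHv : H ≤ stabilizer G v)
    (hself : normalizer ((H.subgroupOf (stabilizer G v) : Subgroup (stabilizer G v)) :
      Set (stabilizer G v)) = H.subgroupOf (stabilizer G v))
    (hn : n ∈ normalizer (H : Set G)) (hnH : n ∉ H) : n • v ≠ v := by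
  intro hnv
  have : (⟨n, hnv⟩ : stabilizer G v) ∈ normalizer
      ((H.subgroupOf (stabilizer G v) : Subgroup (stabilizer G v)) : Set (stabilizer G v)) := by
    rw [← subgroupOf_normalizer_eq hHv]
    exact hn
  rw [hself] at this
  exact hnH this

theorem subgroupOf_stabilizer_smul_eq (hHv : H ≤ stabilizer G v)
    (hmax : IsCoatom (H.subgroupOf (stabilizer G v))) (hn : n ∈ normalizer (H : Set G))
    (hne : ¬ stabilizer G v ≤ stabilizer G (n • v)) :
    (stabilizer G (n • v)).subgroupOf (stabilizer G v) = H.subgroupOf (stabilizer G v) :=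
  (hmax.le_iff.mp (subgroupOf_mono _ (le_stabilizer_smul_of_mem_normalizer hHv hn))).resolve_left
    (by rwa [subgroupOf_eq_top])

end MulAction

open MulAction Subgroup in
theorem stmt_3_general (G Ω : Type*) [Group G] [MulAction G Ω] [FaithfulSMul G Ω]
    -- G acts primitively (transitively with maximal point stabilizers) ...
    (htrans : MulAction.IsPretransitive G Ω)
    (hprim : ∀ ω : Ω, IsCoatom (MulAction.stabilizer G ω))
    -- ... and non-regularly
    (hnonreg : ∃ ω : Ω, MulAction.stabilizer G ω ≠ ⊥)
    (v : Ω) (d : ℕ) (hd : 2 ≤ d)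
    -- G_v has a unique conjugacy class of subgroups of index d ...
    (hconj : ∀ K L : Subgroup (MulAction.stabilizer G v), K.index = d → L.index = d →
      ∃ g : (MulAction.stabilizer G v), Subgroup.map (MulAut.conj g).toMonoidHom K = L)
    -- ... and these subgroups are maximal and self-normalising in G_v
    (hmax : ∀ K : Subgroup (MulAction.stabilizer G v), K.index = d → IsCoatom K)
    (hself : ∀ K : Subgroup (MulAction.stabilizer G v), K.index = d → Subgroup.normalizer (K : Set (MulAction.stabilizer G v)) = K)
    -- H is such a subgroup of index d in G_v
    (H : Subgroup G) (hHle : H ≤ MulAction.stabilizer G v)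
    (hHidx : (H.subgroupOf (MulAction.stabilizer G v)).index = d) :
    -- there is a G-arc-transitive graph (symmetric irreflexive relation) of valency d
    -- iff N/H contains an element of order 2, where N = N_G(H)
    (∃ A : Set (Ω × Ω), (∀ x y : Ω, (x, y) ∈ A → (y, x) ∈ A) ∧ (∀ x : Ω, (x, x) ∉ A) ∧
        IsGArcTransitiveDigraph G A ∧ HasOutValency A d) ↔
      (∃ x : Subgroup.normalizer (H : Set G) ⧸ H.subgroupOf (Subgroup.normalizer (H : Set G)), orderOf x = 2) := by
  rw [exists_orderOf_normalizer_quotient_eq_two_iff]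
  constructor
  · rintro ⟨A, hsym, hirr, hA, hval⟩
    obtain ⟨w, hw⟩ : {y | (v, y) ∈ A}.Nonempty :=
      Set.nonempty_of_ncard_ne_zero (by rw [hval v]; omega)
    have hvw : v ≠ w := fun h => hirr v (h ▸ hw)
    have hwv : (w, v) ∈ orbit G (v, w) := hA.eq_orbit hw ▸ hsym v w hw
    obtain ⟨g, hg⟩ := hwv
    rw [hA.eq_orbit hw, hasOutValency_orbit_iff, ← inf_subgroupOf_right] at hval
    obtain ⟨a, ha⟩ := hconj _ _ hval hHidx
    rw [← map_conj_eq_of_map_conj_subgroupOf inf_le_right hHle ha]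
    exact ⟨_, (isInvolutionMod_stabilizer_inf (congrArg Prod.snd hg) (congrArg Prod.fst hg)
      hvw.symm).map_equiv _⟩
  · rintro ⟨n, hnN, hnH, hnn⟩
    have hnv := smul_ne_of_normalizer_subgroupOf_eq hHle (hself _ hHidx) hnN hnH
    refine ⟨orbit G (v, n • v), fun _ _ => swap_mem_orbit_of_swap_mem ⟨n, ?_⟩,
      not_diag_mem_orbit hnv.symm, isGArcTransitiveDigraph_orbit _, ?_⟩
    · change n • (v, n • v) = (n • v, v)
      rw [Prod.smul_mk, smul_smul, hHle hnn]
    · rw [hasOutValency_orbit_iff, subgroupOf_stabilizer_smul_eq hHle (hmax _ hHidx) hnN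
        (not_stabilizer_le_of_ne hprim hnonreg hnv.symm), hHidx]

theorem stmt_3 (G Ω : Type*) [Group G] [MulAction G Ω] [Finite Ω] [FaithfulSMul G Ω]
    -- G acts primitively (transitively with maximal point stabilizers) ...
    (htrans : MulAction.IsPretransitive G Ω)
    (hprim : ∀ ω : Ω, IsCoatom (MulAction.stabilizer G ω))
    -- ... and non-regularly
    (hnonreg : ∃ ω : Ω, MulAction.stabilizer G ω ≠ ⊥)
    (v : Ω) (d : ℕ) (hd : 2 ≤ d)
    -- G_v has a unique conjugacy class of subgroups of index d ...
    (hconj : ∀ K L : Subgroup (MulAction.stabilizer G v), K.index = d → L.index = d →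
      ∃ g : (MulAction.stabilizer G v), Subgroup.map (MulAut.conj g).toMonoidHom K = L)
    -- ... and these subgroups are maximal and self-normalising in G_v
    (hmax : ∀ K : Subgroup (MulAction.stabilizer G v), K.index = d → IsCoatom K)
    (hself : ∀ K : Subgroup (MulAction.stabilizer G v), K.index = d → Subgroup.normalizer (K : Set (MulAction.stabilizer G v)) = K)
    -- H is such a subgroup of index d in G_v
    (H : Subgroup G) (hHle : H ≤ MulAction.stabilizer G v)
    (hHidx : (H.subgroupOf (MulAction.stabilizer G v)).index = d) :
    -- there is a G-arc-transitive graph (symmetric irreflexive relation) of valency d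
    -- iff N/H contains an element of order 2, where N = N_G(H)
    (∃ A : Set (Ω × Ω), (∀ x y : Ω, (x, y) ∈ A → (y, x) ∈ A) ∧ (∀ x : Ω, (x, x) ∉ A) ∧
        IsGArcTransitiveDigraph G A ∧ HasOutValency A d) ↔
      (∃ x : Subgroup.normalizer (H : Set G) ⧸ H.subgroupOf (Subgroup.normalizer (H : Set G)), orderOf x = 2) :=
  stmt_3_general G Ω htrans hprim hnonreg v d hd hconj hmax hself H hHle hHidx
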